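/- Large-m collapse: if the number m of non-players satisfies m > max{α_i : i ∈ N}, then the only pairwise Nash stable graph is the complete graph on V, and it is a strong pairwise Nash equilibrium graph; consequently the prices of anarchy and stability both equal 1. -/
import Mathlib


open Finset
set_option linter.unusedSectionVars false
set_option linter.unusedVariables false

variable {V : Type*} [Fintype V] [DecidableEq V]

/-- The neighbourhood of `i` in the edge set `E`. -/
def nbhd (E : Finset (Sym2 V)) (i : V) : Finset V :=
  Finset.univ.filter fun j => j ≠ i ∧ s(i, j) ∈ E

/-- The degree of `v` in the edge set `E`. -/
def deg (E : Finset (Sym2 V)) (v : V) : ℕ :=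
  (nbhd E v).card

/-- The utility of player `i` with visibility-aversion `α i` on edge set `E`:
the sum of the degrees of `i`'s neighbours minus `α i` times `i`'s own degree. -/
noncomputable def util (α : V → ℝ) (E : Finset (Sym2 V)) (i : V) : ℝ :=
  (∑ j ∈ nbhd E i, (deg E j : ℝ)) - α i * (deg E i : ℝ)

/-- All unordered pairs of distinct vertices within `C`. -/
def cliqueOn (C : Finset V) : Finset (Sym2 V) :=
  ((C ×ˢ C).filter fun p => p.1 ≠ p.2).image fun p => s(p.1, p.2)

/-- A deviation of the edge set that the coalition `P` of players (among the player
set `N`) can achieve on its own: each added edge is either between two coalition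
members (mutual consent), or unilaterally from a coalition member to a non-player,
or between two non-player neighbours of a coalition member; each removed edge is
incident to a coalition member, or is an edge between two non-player neighbours of
a coalition member (a connection that the member sustained). -/
def CoalDev (N P : Finset V) (E E' : Finset (Sym2 V)) : Prop :=
  (∀ e ∈ E' \ E,
      (∃ i ∈ P, ∃ j ∈ P, i ≠ j ∧ e = s(i, j)) ∨
      (∃ i ∈ P, ∃ j, j ∉ N ∧ j ≠ i ∧ e = s(i, j)) ∨
      (∃ i ∈ P, ∃ j k : V, j ∉ N ∧ k ∉ N ∧ j ≠ k ∧
        s(i, j) ∈ E' ∧ s(i, k) ∈ E' ∧ e = s(j, k))) ∧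
  (∀ e ∈ E \ E',
      (∃ i ∈ P, i ∈ e) ∨
      (∃ i ∈ P, ∃ j k : V, j ∉ N ∧ k ∉ N ∧ j ≠ k ∧
        s(i, j) ∈ E ∧ s(i, k) ∈ E ∧ e = s(j, k)))

/-- Nash stability: no single player has a strictly profitable unilateral deviation. -/
def NashStable (N : Finset V) (α : V → ℝ) (E : Finset (Sym2 V)) : Prop :=
  ∀ i ∈ N, ∀ E' : Finset (Sym2 V), CoalDev N {i} E E' → util α E' i ≤ util α E i

/-- Pairwise stability: any two unconnected players such that connecting would strictly
benefit one must have the other strictly losing from the connection. -/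
def PairStable (N : Finset V) (α : V → ℝ) (E : Finset (Sym2 V)) : Prop :=
  ∀ i ∈ N, ∀ j ∈ N, i ≠ j → s(i, j) ∉ E →
    util α E i < util α (E ∪ {s(i, j)}) i → util α (E ∪ {s(i, j)}) j < util α E j

/-- Pairwise Nash stability. -/
def PANS (N : Finset V) (α : V → ℝ) (E : Finset (Sym2 V)) : Prop :=
  NashStable N α E ∧ PairStable N α E

/-- Strength: no coalition of players has a deviation making all its members weakly
better off and at least one strictly better off. -/
def Strong (N : Finset V) (α : V → ℝ) (E : Finset (Sym2 V)) : Prop :=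
  ∀ P ⊆ N, ∀ E' : Finset (Sym2 V), CoalDev N P E E' →
    ¬ ((∀ i ∈ P, util α E i ≤ util α E' i) ∧ ∃ i ∈ P, util α E i < util α E' i)

/-- Social welfare: the total utility of the players. -/
noncomputable def sw (N : Finset V) (α : V → ℝ) (E : Finset (Sym2 V)) : ℝ :=
  ∑ i ∈ N, util α E i

lemma mem_nbhd {E : Finset (Sym2 V)} {i j : V} :
    j ∈ nbhd E i ↔ j ≠ i ∧ s(i, j) ∈ E := by simp [nbhd]

lemma mem_cliqueOn {C : Finset V} {e : Sym2 V} :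
    e ∈ cliqueOn C ↔ ∃ a ∈ C, ∃ b ∈ C, a ≠ b ∧ e = s(a, b) := by
  simp only [cliqueOn, mem_image, mem_filter, Finset.mem_product]
  constructor
  · rintro ⟨⟨a, b⟩, ⟨⟨ha, hb⟩, hne⟩, rfl⟩; exact ⟨a, ha, b, hb, hne, rfl⟩
  · rintro ⟨a, ha, b, hb, hne, rfl⟩; exact ⟨⟨a, b⟩, ⟨⟨ha, hb⟩, hne⟩, rfl⟩

lemma pair_mem_K {a b : V} (h : a ≠ b) : s(a, b) ∈ cliqueOn (univ : Finset V) :=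
  mem_cliqueOn.2 ⟨a, mem_univ a, b, mem_univ b, h, rfl⟩

lemma nbhd_K (i : V) : nbhd (cliqueOn (univ : Finset V)) i = univ.erase i := by
  ext j
  simp only [mem_nbhd, mem_erase, mem_univ, and_true]
  exact ⟨fun h => h.1, fun h => ⟨h, pair_mem_K (Ne.symm h)⟩⟩

lemma deg_K (i : V) : deg (cliqueOn (univ : Finset V)) i = Fintype.card V - 1 := by
  rw [deg, nbhd_K, card_erase_of_mem (mem_univ i), card_univ]

lemma nbhd_subset (E : Finset (Sym2 V)) (i : V) : nbhd E i ⊆ univ.erase i := by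
  intro j hj; exact mem_erase.2 ⟨(mem_nbhd.1 hj).1, mem_univ j⟩

lemma deg_le (E : Finset (Sym2 V)) (i : V) : deg E i ≤ Fintype.card V - 1 := by
  have := card_le_card (nbhd_subset E i)
  rwa [card_erase_of_mem (mem_univ i), card_univ] at this

lemma nbhd_mono {E E' : Finset (Sym2 V)} (h : E ⊆ E') (i : V) : nbhd E i ⊆ nbhd E' i := by
  intro j hj; rw [mem_nbhd] at *; exact ⟨hj.1, h hj.2⟩

lemma deg_mono {E E' : Finset (Sym2 V)} (h : E ⊆ E') (i : V) : deg E i ≤ deg E' i :=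
  card_le_card (nbhd_mono h i)

lemma util_le_K (α : V → ℝ) (E : Finset (Sym2 V)) (i : V)
    (hα : α i ≤ ((Fintype.card V - 1 : ℕ) : ℝ)) :
    util α E i ≤ util α (cliqueOn (univ : Finset V)) i := by
  set D : ℕ := Fintype.card V - 1 with hD
  have hKi : util α (cliqueOn (univ : Finset V)) i = (D : ℝ) * D - α i * D := by
    rw [util, deg_K]
    congr 1
    rw [nbhd_K]
    rw [Finset.sum_congr rfl (fun j _ => by rw [deg_K])]
    rw [Finset.sum_const, card_erase_of_mem (mem_univ i), card_univ, nsmul_eq_mul]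
  rw [hKi, util]
  have h1 : (∑ j ∈ nbhd E i, (deg E j : ℝ)) ≤ (deg E i : ℝ) * D := by
    calc (∑ j ∈ nbhd E i, (deg E j : ℝ)) ≤ ∑ _j ∈ nbhd E i, (D : ℝ) :=
          Finset.sum_le_sum (fun j _ => Nat.cast_le.2 (deg_le E j))
      _ = (deg E i : ℝ) * D := by rw [Finset.sum_const, nsmul_eq_mul]; rfl
  have h2 : (deg E i : ℝ) ≤ D := Nat.cast_le.2 (deg_le E i)
  nlinarith [h2, hα, h1]

lemma lemA (N : Finset V) (α : V → ℝ)
    (hm : ∀ i ∈ N, α i < ((Fintype.card V - N.card : ℕ) : ℝ))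
    (E : Finset (Sym2 V)) (hNS : NashStable N α E)
    {i : V} (hi : i ∈ N) {j : V} (hj : j ∉ N) : s(i, j) ∈ E := by
  by_contra hE
  set NP : Finset V := univ \ N with hNP
  have hmemNP : ∀ v : V, v ∈ NP ↔ v ∉ N := fun v => by simp [hNP]
  have hcardNP : NP.card = Fintype.card V - N.card := by
    rw [hNP, card_sdiff_of_subset (subset_univ N), card_univ]
  set m : ℕ := NP.card with hmdef
  set E' : Finset (Sym2 V) :=
    (E ∪ NP.image fun k => s(i, k)) ∪ cliqueOn NP with hE'
  have hEsub : E ⊆ E' := fun e he => mem_union_left _ (mem_union_left _ he)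
  have hiNP : i ∉ NP := fun h => (hmemNP i).1 h hi
  have himg : ∀ k ∈ NP, s(i, k) ∈ E' := fun k hk =>
    mem_union_left _ (mem_union_right _ (mem_image_of_mem _ hk))
  have hclq : ∀ a ∈ NP, ∀ b ∈ NP, a ≠ b → s(a, b) ∈ E' := fun a ha b hb hab =>
    mem_union_right _ (mem_cliqueOn.2 ⟨a, ha, b, hb, hab, rfl⟩)
  -- CoalDev
  have hdev : CoalDev N {i} E E' := by
    constructor
    · intro e he
      rw [mem_sdiff] at he
      obtain ⟨he1, he2⟩ := he
      rcases mem_union.1 he1 with h1 | h1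
      · rcases mem_union.1 h1 with h2 | h2
        · exact absurd h2 he2
        · obtain ⟨k, hk, rfl⟩ := mem_image.1 h2
          exact Or.inr (Or.inl ⟨i, mem_singleton_self i, k, (hmemNP k).1 hk,
            fun h => hiNP (h ▸ hk), rfl⟩)
      · obtain ⟨a, ha, b, hb, hab, rfl⟩ := mem_cliqueOn.1 h1
        exact Or.inr (Or.inr ⟨i, mem_singleton_self i, a, b, (hmemNP a).1 ha,
          (hmemNP b).1 hb, hab, himg a ha, himg b hb, rfl⟩)
    · intro e he
      rw [mem_sdiff] at he
      exact absurd (hEsub he.1) he.2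
  -- degree of non-players in E' is at least m
  have hdegNP : ∀ k ∈ NP, m ≤ deg E' k := by
    intro k hk
    have hsub : insert i (NP.erase k) ⊆ nbhd E' k := by
      intro l hl
      rcases mem_insert.1 hl with rfl | hl
      · exact mem_nbhd.2 ⟨fun h => hiNP (h ▸ hk), by rw [Sym2.eq_swap]; exact himg k hk⟩
      · obtain ⟨hlk, hlNP⟩ := mem_erase.1 hl
        exact mem_nbhd.2 ⟨hlk, hclq k hk l hlNP (Ne.symm hlk)⟩
    have hcard : (insert i (NP.erase k)).card = m := by
      rw [card_insert_of_notMem (fun h => hiNP (erase_subset _ _ h)),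
        card_erase_of_mem hk]
      have : 1 ≤ m := card_pos.2 ⟨k, hk⟩
      omega
    calc m = (insert i (NP.erase k)).card := hcard.symm
      _ ≤ (nbhd E' k).card := card_le_card hsub
      _ = deg E' k := rfl
  -- neighbourhood of i in E'
  have hnbhd' : nbhd E' i = nbhd E i ∪ NP := by
    ext l
    simp only [mem_nbhd, mem_union]
    constructor
    · rintro ⟨hli, hl⟩
      rcases mem_union.1 hl with h1 | h1
      · rcases mem_union.1 h1 with h2 | h2
        · exact Or.inl ⟨hli, h2⟩
        · obtain ⟨k, hk, hek⟩ := mem_image.1 h2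
          rcases Sym2.eq_iff.1 hek with ⟨-, rfl⟩ | ⟨rfl, rfl⟩
          · exact Or.inr hk
          · exact absurd hk hiNP
      · obtain ⟨a, ha, b, hb, hab, heab⟩ := mem_cliqueOn.1 h1
        rcases Sym2.eq_iff.1 heab with ⟨rfl, rfl⟩ | ⟨rfl, rfl⟩
        · exact absurd ha hiNP
        · exact absurd hb hiNP
    · rintro (h | h)
      · exact ⟨h.1, hEsub h.2⟩
      · exact ⟨fun he => hiNP (he ▸ h), himg l h⟩
  set T : Finset V := NP \ nbhd E i with hT
  have hnbhd'' : nbhd E' i = nbhd E i ∪ T := by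
    rw [hnbhd', hT, union_sdiff_self_eq_union]
  have hdisj : Disjoint (nbhd E i) T := disjoint_sdiff
  have hdeg'i : deg E' i = deg E i + T.card := by
    rw [deg, hnbhd'', card_union_of_disjoint hdisj]; rfl
  have hjT : j ∈ T := by
    rw [hT, mem_sdiff, hmemNP]
    exact ⟨hj, fun h => hE (mem_nbhd.1 h).2⟩
  have hTpos : 1 ≤ T.card := card_pos.2 ⟨j, hjT⟩
  -- utility gain
  have hsum : (∑ l ∈ nbhd E' i, (deg E' l : ℝ)) =
      (∑ l ∈ nbhd E i, (deg E' l : ℝ)) + ∑ l ∈ T, (deg E' l : ℝ) := by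
    rw [hnbhd'', sum_union hdisj]
  have hs1 : (∑ l ∈ nbhd E i, (deg E l : ℝ)) ≤ ∑ l ∈ nbhd E i, (deg E' l : ℝ) :=
    Finset.sum_le_sum fun l _ => Nat.cast_le.2 (deg_mono hEsub l)
  have hs2 : (T.card : ℝ) * m ≤ ∑ l ∈ T, (deg E' l : ℝ) := by
    calc (T.card : ℝ) * m = ∑ _l ∈ T, (m : ℝ) := by rw [Finset.sum_const, nsmul_eq_mul]
      _ ≤ ∑ l ∈ T, (deg E' l : ℝ) := Finset.sum_le_sum fun l hl =>
          Nat.cast_le.2 (hdegNP l (sdiff_subset hl))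
  have hαm : α i < (m : ℝ) := by rw [hcardNP]; exact hm i hi
  have hgain : util α E i < util α E' i := by
    rw [util, util, hsum, hdeg'i]
    push_cast
    have hT1 : (1 : ℝ) ≤ T.card := by exact_mod_cast hTpos
    nlinarith [hs1, hs2, hT1, hαm]
  exact absurd (hNS i hi E' hdev) (not_le.2 hgain)

-- gain from adding a single edge between i and j
lemma gain_lower (α : V → ℝ) (E : Finset (Sym2 V)) {i j : V} (hij : i ≠ j)
    (hE : s(i, j) ∉ E) :
    util α E i + ((deg E j : ℝ) + 1 - α i) ≤ util α (E ∪ {s(i, j)}) i := by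
  set E' : Finset (Sym2 V) := E ∪ {s(i, j)} with hE'
  have hEsub : E ⊆ E' := subset_union_left
  have hmem : s(i, j) ∈ E' := mem_union_right _ (mem_singleton_self _)
  have hnbhd' : nbhd E' i = insert j (nbhd E i) := by
    ext l
    simp only [mem_nbhd, mem_insert]
    constructor
    · rintro ⟨hli, hl⟩
      rcases mem_union.1 hl with h1 | h1
      · exact Or.inr ⟨hli, h1⟩
      · rcases Sym2.eq_iff.1 (mem_singleton.1 h1) with ⟨-, rfl⟩ | ⟨rfl, rfl⟩
        · exact Or.inl rfl
        · exact absurd rfl hli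
    · rintro (rfl | h)
      · exact ⟨Ne.symm hij, hmem⟩
      · exact ⟨h.1, hEsub h.2⟩
    
  have hjn : j ∉ nbhd E i := fun h => hE (mem_nbhd.1 h).2
  have hdeg'i : deg E' i = deg E i + 1 := by
    rw [deg, hnbhd', card_insert_of_notMem hjn]; rfl
  have hdegj : deg E j + 1 ≤ deg E' j := by
    have hin : i ∉ nbhd E j := fun h => hE (by rw [← Sym2.eq_swap]; exact (mem_nbhd.1 h).2)
    have hsub : insert i (nbhd E j) ⊆ nbhd E' j := by
      intro l hl
      rcases mem_insert.1 hl with rfl | hl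
      · exact mem_nbhd.2 ⟨hij, by rw [Sym2.eq_swap]; exact hmem⟩
      · exact nbhd_mono hEsub j hl
    calc deg E j + 1 = (insert i (nbhd E j)).card := (card_insert_of_notMem hin).symm
      _ ≤ _ := card_le_card hsub
  have hsum : (∑ l ∈ nbhd E i, (deg E l : ℝ)) + ((deg E j : ℝ) + 1) ≤
      ∑ l ∈ nbhd E' i, (deg E' l : ℝ) := by
    rw [hnbhd', Finset.sum_insert hjn]
    have h1 : (∑ l ∈ nbhd E i, (deg E l : ℝ)) ≤ ∑ l ∈ nbhd E i, (deg E' l : ℝ) :=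
      Finset.sum_le_sum fun l _ => Nat.cast_le.2 (deg_mono hEsub l)
    have h2 : (deg E j : ℝ) + 1 ≤ deg E' j := by exact_mod_cast hdegj
    linarith
  rw [util, util, hdeg'i]
  push_cast
  linarith

-- Lemma B
lemma lemB (N : Finset V) (α : V → ℝ)
    (hm : ∀ i ∈ N, α i < ((Fintype.card V - N.card : ℕ) : ℝ))
    (E : Finset (Sym2 V)) (hNS : NashStable N α E)
    {i : V} (hi : i ∈ N) {j k : V} (hj : j ∉ N) (hk : k ∉ N) (hjk : j ≠ k) :
    s(j, k) ∈ E := by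
  by_contra hjkE
  have hij : s(i, j) ∈ E := lemA N α hm E hNS hi hj
  have hik : s(i, k) ∈ E := lemA N α hm E hNS hi hk
  set E' : Finset (Sym2 V) := E ∪ {s(j, k)} with hE'
  have hEsub : E ⊆ E' := subset_union_left
  have hdev : CoalDev N {i} E E' := by
    constructor
    · intro e he
      rw [mem_sdiff] at he
      have : e = s(j, k) := by
        rcases mem_union.1 he.1 with h | h
        · exact absurd h he.2
        · exact mem_singleton.1 h
      exact Or.inr (Or.inr ⟨i, mem_singleton_self i, j, k, hj, hk, hjk,
        hEsub hij, hEsub hik, this⟩)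
    · intro e he
      rw [mem_sdiff] at he
      exact absurd (hEsub he.1) he.2
  have hiN : ∀ l : V, l ∉ N → i ≠ l := fun l hl he => hl (he ▸ hi)
  have hnbhd' : nbhd E' i = nbhd E i := by
    ext l
    simp only [mem_nbhd]
    constructor
    · rintro ⟨hli, hl⟩
      rcases mem_union.1 hl with h | h
      · exact ⟨hli, h⟩
      · rcases Sym2.eq_iff.1 (mem_singleton.1 h) with ⟨h1, -⟩ | ⟨h1, -⟩
        · exact absurd h1 (hiN j hj)
        · exact absurd h1 (hiN k hk)
    · rintro ⟨hli, hl⟩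
      exact ⟨hli, hEsub hl⟩
  have hjmem : j ∈ nbhd E i := mem_nbhd.2 ⟨fun h => hj (h ▸ hi), hij⟩
  have hdegj : deg E j < deg E' j := by
    have hkn : k ∉ nbhd E j := fun h => hjkE (mem_nbhd.1 h).2
    have hsub : insert k (nbhd E j) ⊆ nbhd E' j := by
      intro l hl
      rcases mem_insert.1 hl with rfl | hl
      · exact mem_nbhd.2 ⟨Ne.symm hjk, mem_union_right _ (mem_singleton_self _)⟩
      · exact nbhd_mono hEsub j hl
    calc deg E j < (insert k (nbhd E j)).card := by
          rw [card_insert_of_notMem hkn]; exact Nat.lt_succ_self _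
      _ ≤ _ := card_le_card hsub
  have hgain : util α E i < util α E' i := by
    rw [util, util, hnbhd']
    have hdeg'i : deg E' i = deg E i := by rw [deg, deg, hnbhd']
    rw [hdeg'i]
    have hsum : (∑ l ∈ nbhd E i, (deg E l : ℝ)) < ∑ l ∈ nbhd E i, (deg E' l : ℝ) :=
      Finset.sum_lt_sum (fun l _ => Nat.cast_le.2 (deg_mono hEsub l))
        ⟨j, hjmem, Nat.cast_lt.2 hdegj⟩
    linarith
  exact absurd (hNS i hi E' hdev) (not_le.2 hgain)
lemma deg_ge_m (N : Finset V) (α : V → ℝ)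
    (hm : ∀ i ∈ N, α i < ((Fintype.card V - N.card : ℕ) : ℝ))
    (E : Finset (Sym2 V)) (hNS : NashStable N α E) {i : V} (hi : i ∈ N) :
    Fintype.card V - N.card ≤ deg E i := by
  have hsub : univ \ N ⊆ nbhd E i := by
    intro k hk
    have hkN : k ∉ N := (mem_sdiff.1 hk).2
    exact mem_nbhd.2 ⟨fun h => hkN (h ▸ hi), lemA N α hm E hNS hi hkN⟩
  calc Fintype.card V - N.card = (univ \ N).card := by
        rw [card_sdiff_of_subset (subset_univ N), card_univ]
    _ ≤ _ := card_le_card hsub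

-- Lemma C
lemma lemC (N : Finset V) (α : V → ℝ)
    (hm : ∀ i ∈ N, α i < ((Fintype.card V - N.card : ℕ) : ℝ))
    (E : Finset (Sym2 V)) (hP : PANS N α E)
    {i j : V} (hi : i ∈ N) (hj : j ∈ N) (hij : i ≠ j) : s(i, j) ∈ E := by
  by_contra hE
  obtain ⟨hNS, hPS⟩ := hP
  have hdi : ((Fintype.card V - N.card : ℕ) : ℝ) ≤ (deg E i : ℝ) :=
    Nat.cast_le.2 (deg_ge_m N α hm E hNS hi)
  have hdj : ((Fintype.card V - N.card : ℕ) : ℝ) ≤ (deg E j : ℝ) :=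
    Nat.cast_le.2 (deg_ge_m N α hm E hNS hj)
  have hgi : util α E i < util α (E ∪ {s(i, j)}) i := by
    have := gain_lower α E hij hE
    have hmi := hm i hi
    linarith
  have hlt := hPS i hi j hj hij hE hgi
  have hE2 : s(j, i) ∉ E := by rwa [Sym2.eq_swap]
  have hgj : util α E j + ((deg E i : ℝ) + 1 - α j) ≤ util α (E ∪ {s(j, i)}) j :=
    gain_lower α E (Ne.symm hij) hE2
  rw [Sym2.eq_swap] at hgj
  have hmj := hm j hj
  linarith

-- K is pairwise Nash stable and strong
lemma K_max (N : Finset V) (hN : 2 ≤ N.card) (α : V → ℝ)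
    (hm : ∀ i ∈ N, α i < ((Fintype.card V - N.card : ℕ) : ℝ))
    (E : Finset (Sym2 V)) {i : V} (hi : i ∈ N) :
    util α E i ≤ util α (cliqueOn (univ : Finset V)) i := by
  apply util_le_K
  apply le_of_lt
  calc α i < ((Fintype.card V - N.card : ℕ) : ℝ) := hm i hi
    _ ≤ ((Fintype.card V - 1 : ℕ) : ℝ) := by
        have : Fintype.card V - N.card ≤ Fintype.card V - 1 := by omega
        exact_mod_cast this

lemma strong_K (N : Finset V) (hN : 2 ≤ N.card) (α : V → ℝ)
    (hm : ∀ i ∈ N, α i < ((Fintype.card V - N.card : ℕ) : ℝ)) :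
    Strong N α (cliqueOn (univ : Finset V)) := by
  intro P hP E' _ h
  obtain ⟨-, i, hi, hlt⟩ := h
  exact absurd (K_max N hN α hm E' (hP hi)) (not_le.2 hlt)

lemma PANS_K (N : Finset V) (hN : 2 ≤ N.card) (α : V → ℝ)
    (hm : ∀ i ∈ N, α i < ((Fintype.card V - N.card : ℕ) : ℝ)) :
    PANS N α (cliqueOn (univ : Finset V)) := by
  constructor
  · intro i hi E' _
    exact K_max N hN α hm E' hi
  · intro i hi j hj hij hE
    exact absurd (pair_mem_K hij) hE

lemma PANS_iff (N : Finset V) (hN : 2 ≤ N.card) (α : V → ℝ)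
    (hm : ∀ i ∈ N, α i < ((Fintype.card V - N.card : ℕ) : ℝ))
    (E : Finset (Sym2 V)) (hEK : E ⊆ cliqueOn (univ : Finset V)) :
    PANS N α E ↔ E = cliqueOn (univ : Finset V) := by
  constructor
  · intro hP
    refine Finset.Subset.antisymm hEK (fun e he => ?_)
    obtain ⟨a, -, b, -, hab, rfl⟩ := mem_cliqueOn.1 he
    by_cases haN : a ∈ N <;> by_cases hbN : b ∈ N
    · exact lemC N α hm E hP haN hbN hab
    · exact lemA N α hm E hP.1 haN hbN
    · rw [Sym2.eq_swap]; exact lemA N α hm E hP.1 hbN haN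
    · obtain ⟨i0, hi0⟩ := Finset.card_pos.1 (show 0 < N.card by omega)
      exact lemB N α hm E hP.1 hi0 haN hbN hab
  · rintro rfl
    exact PANS_K N hN α hm

lemma util_K_eq (α : V → ℝ) (i : V) :
    util α (cliqueOn (univ : Finset V)) i =
      ((Fintype.card V - 1 : ℕ) : ℝ) * ((Fintype.card V - 1 : ℕ) : ℝ) -
        α i * ((Fintype.card V - 1 : ℕ) : ℝ) := by
  rw [util, deg_K]
  congr 1
  rw [nbhd_K]
  rw [Finset.sum_congr rfl (fun j _ => by rw [deg_K])]
  rw [Finset.sum_const, card_erase_of_mem (mem_univ i), card_univ, nsmul_eq_mul]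

lemma sw_le (N : Finset V) (hN : 2 ≤ N.card) (α : V → ℝ)
    (hm : ∀ i ∈ N, α i < ((Fintype.card V - N.card : ℕ) : ℝ))
    (E : Finset (Sym2 V)) :
    sw N α E ≤ sw N α (cliqueOn (univ : Finset V)) :=
  Finset.sum_le_sum fun i hi => K_max N hN α hm E hi

lemma swK_pos (N : Finset V) (hN : 2 ≤ N.card) (α : V → ℝ)
    (hm : ∀ i ∈ N, α i < ((Fintype.card V - N.card : ℕ) : ℝ)) :
    0 < sw N α (cliqueOn (univ : Finset V)) := by
  have hVc : 2 ≤ Fintype.card V := le_trans hN (Finset.card_le_univ N)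
  obtain ⟨i0, hi0⟩ := Finset.card_pos.1 (show 0 < N.card by omega)
  apply Finset.sum_pos _ ⟨i0, hi0⟩
  intro i hi
  rw [util_K_eq]
  have hD1 : (1 : ℝ) ≤ ((Fintype.card V - 1 : ℕ) : ℝ) := by
    exact_mod_cast (show 1 ≤ Fintype.card V - 1 by omega)
  have hα : α i < ((Fintype.card V - 1 : ℕ) : ℝ) :=
    lt_of_lt_of_le (hm i hi) (by exact_mod_cast (show Fintype.card V - N.card ≤ Fintype.card V - 1 by omega))
  nlinarith

/-- Large-`m` collapse: if `m` (the number of non-players) exceeds every `α_i`, the only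
pairwise Nash stable graph is the complete graph, it is strong, and the prices of
anarchy and stability both equal `1`. -/
theorem large_m_collapse (N : Finset V) (hN : 2 ≤ N.card)
    (α : V → ℝ) (hα0 : ∀ i ∈ N, 0 ≤ α i)
    (hm : ∀ i ∈ N, α i < ((Fintype.card V - N.card : ℕ) : ℝ)) :
    (∀ E ⊆ cliqueOn (Finset.univ : Finset V),
      (PANS N α E ↔ E = cliqueOn (Finset.univ : Finset V))) ∧
    Strong N α (cliqueOn (Finset.univ : Finset V)) ∧
    sSup ((fun E => sw N α E) '' {E | E ⊆ cliqueOn (Finset.univ : Finset V)}) /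
        sInf ((fun E => sw N α E) ''
          {E | E ⊆ cliqueOn (Finset.univ : Finset V) ∧ PANS N α E}) = 1 ∧
    sSup ((fun E => sw N α E) '' {E | E ⊆ cliqueOn (Finset.univ : Finset V)}) /
        sSup ((fun E => sw N α E) ''
          {E | E ⊆ cliqueOn (Finset.univ : Finset V) ∧ PANS N α E}) = 1 := by
  set K : Finset (Sym2 V) := cliqueOn (univ : Finset V) with hKdef
  have hK : PANS N α K := PANS_K N hN α hm
  have hiff : ∀ E ⊆ K, (PANS N α E ↔ E = K) := fun E hE => PANS_iff N hN α hm E hE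
  have hset : {E : Finset (Sym2 V) | E ⊆ K ∧ PANS N α E} = {K} := by
    ext E
    simp only [Set.mem_setOf_eq, Set.mem_singleton_iff]
    constructor
    · rintro ⟨h1, h2⟩; exact (hiff E h1).1 h2
    · rintro rfl; exact ⟨subset_rfl, hK⟩
  have himg2 : (fun E => sw N α E) '' {E : Finset (Sym2 V) | E ⊆ K ∧ PANS N α E}
      = {sw N α K} := by rw [hset, Set.image_singleton]
  have hS1 : sSup ((fun E => sw N α E) '' {E : Finset (Sym2 V) | E ⊆ K}) = sw N α K := by
    apply IsGreatest.csSup_eq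
    constructor
    · exact ⟨K, show K ⊆ K from subset_rfl, rfl⟩
    · rintro x ⟨E, -, rfl⟩
      exact sw_le N hN α hm E
  have hpos := swK_pos N hN α hm
  refine ⟨hiff, strong_K N hN α hm, ?_, ?_⟩
  · rw [hS1, himg2, csInf_singleton]
    exact div_self (ne_of_gt hpos)
  · rw [hS1, himg2, csSup_singleton]
    exact div_self (ne_of_gt hpos)
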